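/- Let U₀ < 0 < U₁, v₀ > U₁ + 1, L₀ ≥ 0, and let D := {(u,v) : U₀ ≤ u ≤ U₁, v ≥ v₀}; write t := (v+u)²/4 and r := v−u on D. There exist ε̄ > 0 and C ≥ 1, depending only on U₀, U₁, v₀ and L₀, with the following property. Let Ω², R be positive C¹ functions on D with λ := ∂_v R, ν := ∂_u R, satisfying on D, for some 0 ≤ ε ≤ ε̄: |Ω² − 4t| ≤ ε·t, |∂_v log Ω² − t^{−1/2}| ≤ ε/t, |∂_u log Ω² − t^{−1/2}| ≤ ε, |R − t^{1/2}·r| ≤ ε, |λ − v| ≤ ε, |ν + u| ≤ ε. Let L ∈ [0, L₀] and let (u, v, pu, pv) : [s₀,S) → ℝ⁴ satisfy (u(s),v(s)) ∈ D for all s, u' = pu, v' = pv, pu' = −(∂_u log Ω²)·pu² − 2λL²/(Ω²R³), pv' = −(∂_v log Ω²)·pv² − 2νL²/(Ω²R³) (coefficients evaluated at (u(s),v(s))), the mass shell relation Ω²·R²·pu·pv = L², pu ≥ 0, pv ≥ 0, v(s₀) = v₀, pv(s₀) > 0 and pu(s₀) ≤ (1/2)·pv(s₀). Then for all s ∈ [s₀,S):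 C^{−1}·t(s₀)·pv(s₀) ≤ t(s)·pv(s) ≤ C·t(s₀)·pv(s₀); 0 ≤ pu(s) ≤ C·L²/(t(s)·r(s)²·t(s₀)·pv(s₀)); and u is nondecreasing with u(s) ≤ u(s₀) + C·(L/(t(s₀)·pv(s₀)))². -/

import Mathlib

/-!
Write `m = t^{1/2} = (v+u)/2`, so that `m' = (pv+pu)/2 ≥ 0`, and `q = t·pv`. Eliminating `L²` by the
mass shell relation, the geodesic equation gives `q' = (m − 2m²ν/R)·pu·pv + (m − m²∂_v log Ω²)·pv²`;
near FLRW the first coefficient lies in `[0, 5(U₁+1)m]`, the second in `[−ε, ε]`, and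
`pu·pv ≲ L²/(m⁴r²)`. Since `ε·pv² ≤ 2ε·q·m'/m²`, the integrating factor `exp(−2ε/m)`, bounded
because `2ε ≤ m`, gives `q ≥ q(s₀)/e`. This lower bound on `pv` turns a source of size `m^{-(j+2)}`
into a multiple of `m'/m^j`, whose integral in `s` is `O(m(s₀)^{1-j})`. Applied to the `L²` term of
`q'` (with the integrating factor `exp(2ε/m)`, and `L ≲ q(s₀)` from `pu(s₀) ≤ pv(s₀)/2`) this bounds
`q` from above, and applied to `u' = pu ≲ L²/(t·r²·q(s₀))` it bounds the drift of `u`.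
-/

open Set

/-- The time coordinate `t = (v+u)²/4` along a curve in double null coordinates. -/
noncomputable def tOf (u v : ℝ → ℝ) (s : ℝ) : ℝ := (v s + u s) ^ 2 / 4

/-- The radial coordinate `r = v − u` along a curve in double null coordinates. -/
noncomputable def rOf (u v : ℝ → ℝ) (s : ℝ) : ℝ := v s - u s

open Real

theorem monotoneOn_Ico_of_hasDerivAt_nonneg {f f' : ℝ → ℝ} {a b : ℝ}
    (hf : ∀ x ∈ Ico a b, HasDerivAt f (f' x) x) (hf' : ∀ x ∈ Ico a b, 0 ≤ f' x) :
    MonotoneOn f (Ico a b) :=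
  monotoneOn_of_hasDerivWithinAt_nonneg (convex_Ico a b)
    (fun x hx => (hf x hx).continuousAt.continuousWithinAt)
    (fun x hx => (hf x (interior_subset hx)).hasDerivWithinAt)
    (fun x hx => hf' x (interior_subset hx))

theorem sub_le_sub_of_hasDerivAt_le {f f' g g' : ℝ → ℝ} {a b s : ℝ}
    (hf : ∀ x ∈ Ico a b, HasDerivAt f (f' x) x) (hg : ∀ x ∈ Ico a b, HasDerivAt g (g' x) x)
    (hle : ∀ x ∈ Ico a b, f' x ≤ g' x) (hs : s ∈ Ico a b) : f s - f a ≤ g s - g a := by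
  have hmono := monotoneOn_Ico_of_hasDerivAt_nonneg (fun x hx => (hg x hx).sub (hf x hx))
    (fun x hx => sub_nonneg.2 (hle x hx))
  have := hmono ⟨le_rfl, hs.1.trans_lt hs.2⟩ hs hs.1
  simp only [Pi.sub_apply] at this
  linarith

theorem HasDerivAt.const_div {m : ℝ → ℝ} {m' x : ℝ} (hm : HasDerivAt m m' x) (hx : m x ≠ 0)
    (c : ℝ) : HasDerivAt (fun y => c / m y) (-(c * m') / m x ^ 2) x := by
  simpa using (hasDerivAt_const x c).fun_div hm hx

section Comparison

variable {m m' : ℝ → ℝ} {a b c k s : ℝ}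

theorem exp_neg_one_mul_le_of_hasDerivAt {q q' : ℝ → ℝ}
    (hm : ∀ x ∈ Ico a b, HasDerivAt m (m' x) x) (hm0 : ∀ x ∈ Ico a b, 0 < m x)
    (hq : ∀ x ∈ Ico a b, HasDerivAt q (q' x) x)
    (hq' : ∀ x ∈ Ico a b, -(c * m' x / m x ^ 2 * q x) ≤ q' x)
    (hc : 0 ≤ c) (hca : c ≤ m a) (hqa : 0 ≤ q a) (hs : s ∈ Ico a b) :
    exp (-1) * q a ≤ q s := by
  have ha : a ∈ Ico a b := ⟨le_rfl, hs.1.trans_lt hs.2⟩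
  have hmono : MonotoneOn (fun x => q x * exp (-c / m x)) (Ico a b) := by
    refine monotoneOn_Ico_of_hasDerivAt_nonneg
      (fun x hx => (hq x hx).mul (((hm x hx).const_div (hm0 x hx).ne' (-c)).exp))
      fun x hx => ?_
    have : 0 ≤ q' x + c * m' x / m x ^ 2 * q x := by linarith [hq' x hx]
    exact le_of_le_of_eq (mul_nonneg (exp_pos (-c / m x)).le this) (by ring)
  have hqs : q a * exp (-c / m a) ≤ q s * exp (-c / m s) := hmono ha hs hs.1
  have hqs0 : 0 ≤ q s :=
    nonneg_of_mul_nonneg_left ((mul_nonneg hqa (exp_pos _).le).trans hqs) (exp_pos _)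
  calc exp (-1) * q a ≤ exp (-c / m a) * q a := by
        gcongr
        rw [neg_div, neg_le_neg_iff]
        exact (div_le_one (hm0 a ha)).2 hca
    _ ≤ q s * exp (-c / m s) := by linarith
    _ ≤ q s := mul_le_of_le_one_right hqs0 (exp_le_one_iff.2
        (div_nonpos_of_nonpos_of_nonneg (neg_nonpos.2 hc) (hm0 s hs).le))

theorem mul_exp_div_le_of_hasDerivAt {q q' : ℝ → ℝ}
    (hm : ∀ x ∈ Ico a b, HasDerivAt m (m' x) x) (hm0 : ∀ x ∈ Ico a b, 0 < m x)
    (hm' : ∀ x ∈ Ico a b, 0 ≤ m' x) (hq : ∀ x ∈ Ico a b, HasDerivAt q (q' x) x)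
    (hq' : ∀ x ∈ Ico a b, q' x ≤ c * m' x / m x ^ 2 * q x + k * m' x / m x ^ 3)
    (hc : 0 ≤ c) (hk : 0 ≤ k) (hs : s ∈ Ico a b) :
    q s * exp (c / m s) ≤ exp (c / m a) * (q a + k / (2 * m a ^ 2)) := by
  have ha : a ∈ Ico a b := ⟨le_rfl, hs.1.trans_lt hs.2⟩
  have hmono := monotoneOn_Ico_of_hasDerivAt_nonneg hm hm'
  have hcmp := sub_le_sub_of_hasDerivAt_le (f := fun x => q x * exp (c / m x))
    (fun x hx => (hq x hx).mul (((hm x hx).const_div (hm0 x hx).ne' c).exp))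
    (fun x hx => ((hm x hx).fun_pow 2).const_div (pow_pos (hm0 x hx) 2).ne'
      (-(exp (c / m a) * k / 2)))
    (fun x hx => by
      have hmx := hm0 x hx
      have hexp : exp (c / m x) ≤ exp (c / m a) :=
        exp_le_exp.2 (div_le_div_of_nonneg_left hc (hm0 a ha) (hmono ha hx hx.1))
      have hkm : 0 ≤ k * m' x / m x ^ 3 := by have := hm' x hx; positivity
      calc q' x * exp (c / m x) + q x * (exp (c / m x) * (-(c * m' x) / m x ^ 2))
          = exp (c / m x) * (q' x - c * m' x / m x ^ 2 * q x) := by ring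
        _ ≤ exp (c / m x) * (k * m' x / m x ^ 3) :=
          mul_le_mul_of_nonneg_left (by linarith [hq' x hx]) (exp_pos _).le
        _ ≤ exp (c / m a) * (k * m' x / m x ^ 3) := mul_le_mul_of_nonneg_right hexp hkm
        _ = _ := by field_simp; ring)
    hs
  have hK : 0 ≤ exp (c / m a) * k / 2 / m s ^ 2 := by positivity
  simp only [neg_div, sub_neg_eq_add] at hcmp
  calc q s * exp (c / m s) ≤ q a * exp (c / m a) + exp (c / m a) * k / 2 / m a ^ 2 := by
        linarith
    _ = _ := by ring

theorem le_exp_one_mul_of_hasDerivAt {q q' : ℝ → ℝ}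
    (hm : ∀ x ∈ Ico a b, HasDerivAt m (m' x) x) (hm0 : ∀ x ∈ Ico a b, 0 < m x)
    (hm' : ∀ x ∈ Ico a b, 0 ≤ m' x) (hq : ∀ x ∈ Ico a b, HasDerivAt q (q' x) x)
    (hq' : ∀ x ∈ Ico a b, q' x ≤ c * m' x / m x ^ 2 * q x + k * m' x / m x ^ 3)
    (hc : 0 ≤ c) (hca : c ≤ m a) (hk : 0 ≤ k) (hqa : 0 ≤ q a) (hs : s ∈ Ico a b) :
    q s ≤ exp 1 * (q a + k / (2 * m a ^ 2)) := by
  have ha : a ∈ Ico a b := ⟨le_rfl, hs.1.trans_lt hs.2⟩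
  have hma := hm0 a ha
  have hbound : q s * exp (c / m s) ≤ exp 1 * (q a + k / (2 * m a ^ 2)) :=
    (mul_exp_div_le_of_hasDerivAt hm hm0 hm' hq hq' hc hk hs).trans
      (by gcongr; exact (div_le_one hma).2 hca)
  rcases le_or_gt 0 (q s) with hqs | hqs
  · have := hm0 s hs
    exact (le_mul_of_one_le_right hqs (one_le_exp (by positivity))).trans hbound
  · exact hqs.le.trans (by positivity)

theorem le_add_div_of_hasDerivAt {f f' : ℝ → ℝ}
    (hm : ∀ x ∈ Ico a b, HasDerivAt m (m' x) x) (hm0 : ∀ x ∈ Ico a b, 0 < m x)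
    (hf : ∀ x ∈ Ico a b, HasDerivAt f (f' x) x)
    (hf' : ∀ x ∈ Ico a b, f' x ≤ k * m' x / m x ^ 2) (hk : 0 ≤ k) (hs : s ∈ Ico a b) :
    f s ≤ f a + k / m a := by
  have hcmp := sub_le_sub_of_hasDerivAt_le hf
    (fun x hx => (hm x hx).const_div (hm0 x hx).ne' (-k))
    (fun x hx => by simpa only [neg_mul, neg_neg] using hf' x hx) hs
  have : 0 ≤ k / m s := div_nonneg hk (hm0 s hs).le
  rw [neg_div, neg_div] at hcmp
  linarith

end Comparison

noncomputable def sqrtTOf (u v : ℝ → ℝ) (s : ℝ) : ℝ := (v s + u s) / 2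

theorem sqrtTOf_sq (u v : ℝ → ℝ) (s : ℝ) : sqrtTOf u v s ^ 2 = tOf u v s := by
  rw [sqrtTOf, tOf]; ring

theorem HasDerivAt.sqrtTOf {u v : ℝ → ℝ} {a b s : ℝ} (hu : HasDerivAt u a s)
    (hv : HasDerivAt v b s) : HasDerivAt (sqrtTOf u v) ((b + a) / 2) s :=
  (hv.add hu).div_const 2

/-- `d(t·pv)/ds` along the geodesic flow, with `L²` eliminated by the mass shell relation. -/
noncomputable def tpvDeriv (u v pu pv R N D : ℝ → ℝ) (s : ℝ) : ℝ :=
  (sqrtTOf u v s - 2 * sqrtTOf u v s ^ 2 * N s / R s) * (pu s * pv s)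
    + (sqrtTOf u v s - sqrtTOf u v s ^ 2 * D s) * pv s ^ 2

noncomputable def perturbationThreshold (U₀ v₀ : ℝ) : ℝ :=
  min 1 (min ((v₀ + U₀) / 4) ((v₀ + U₀) ^ 2 / 4))

theorem perturbationThreshold_pos {U₀ v₀ : ℝ} (h : 0 < v₀ + U₀) :
    0 < perturbationThreshold U₀ v₀ := by
  unfold perturbationThreshold; positivity

noncomputable def geodesicConstant (U₀ U₁ v₀ : ℝ) : ℝ :=
  max (4 * exp 1 / 3) <| max
    (exp 1 * (1 + 160 * exp 1 * (U₁ + 1) ^ 3 * (v₀ - U₀) ^ 2 / (v₀ + U₀) ^ 2))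
    (16 * exp 1 ^ 2 * (U₁ + 1) ^ 2 / (3 * (v₀ + U₀)))

theorem exp_one_le_geodesicConstant (U₀ U₁ v₀ : ℝ) : exp 1 ≤ geodesicConstant U₀ U₁ v₀ :=
  le_trans (by linarith [exp_pos 1]) (le_max_left _ _)

/-- The hypotheses along one geodesic, where `A, R, N, D` stand for `Ω², R, ν, ∂_v log Ω²`
evaluated at `(u s, v s)`. -/
structure IsPerturbedFLRWGeodesic (U₀ U₁ v₀ ε L s₀ S : ℝ) (u v pu pv A R N D : ℝ → ℝ) :
    Prop where
  U₁_pos : 0 < U₁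
  U₁_add_one_lt : U₁ + 1 < v₀
  v₀_add_U₀_pos : 0 < v₀ + U₀
  ε_nonneg : 0 ≤ ε
  ε_le : ε ≤ perturbationThreshold U₀ v₀
  mem : ∀ s ∈ Ico s₀ S, u s ∈ Icc U₀ U₁ ∧ v s ∈ Ici v₀
  hasDerivAt_u : ∀ s ∈ Ico s₀ S, HasDerivAt u (pu s) s
  hasDerivAt_v : ∀ s ∈ Ico s₀ S, HasDerivAt v (pv s) s
  hasDerivAt_pv : ∀ s ∈ Ico s₀ S,
    HasDerivAt pv (-D s * pv s ^ 2 - 2 * N s * L ^ 2 / (A s * R s ^ 3)) s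
  mass_shell : ∀ s ∈ Ico s₀ S, A s * R s ^ 2 * pu s * pv s = L ^ 2
  pu_nonneg : ∀ s ∈ Ico s₀ S, 0 ≤ pu s
  pv_nonneg : ∀ s ∈ Ico s₀ S, 0 ≤ pv s
  abs_A_sub_le : ∀ s ∈ Ico s₀ S, |A s - 4 * tOf u v s| ≤ ε * tOf u v s
  abs_D_sub_le : ∀ s ∈ Ico s₀ S, |D s - 1 / √(tOf u v s)| ≤ ε / tOf u v s
  abs_R_sub_le : ∀ s ∈ Ico s₀ S, |R s - √(tOf u v s) * rOf u v s| ≤ ε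
  abs_N_add_le : ∀ s ∈ Ico s₀ S, |N s + u s| ≤ ε

namespace IsPerturbedFLRWGeodesic

variable {U₀ U₁ v₀ ε L s₀ S s : ℝ} {u v pu pv A R N D : ℝ → ℝ}

theorem ε_le_one (h : IsPerturbedFLRWGeodesic U₀ U₁ v₀ ε L s₀ S u v pu pv A R N D) : ε ≤ 1 :=
  h.ε_le.trans (min_le_left _ _)

theorem four_mul_ε_le (h : IsPerturbedFLRWGeodesic U₀ U₁ v₀ ε L s₀ S u v pu pv A R N D) :
    4 * ε ≤ v₀ + U₀ := by
  have := h.ε_le.trans ((min_le_right _ _).trans (min_le_left _ _)); linarith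

theorem four_mul_ε_le_sq (h : IsPerturbedFLRWGeodesic U₀ U₁ v₀ ε L s₀ S u v pu pv A R N D) :
    4 * ε ≤ (v₀ + U₀) ^ 2 := by
  have := h.ε_le.trans ((min_le_right _ _).trans (min_le_right _ _)); linarith

theorem half_le_sqrtTOf (h : IsPerturbedFLRWGeodesic U₀ U₁ v₀ ε L s₀ S u v pu pv A R N D)
    (hs : s ∈ Ico s₀ S) : (v₀ + U₀) / 2 ≤ sqrtTOf u v s := by
  obtain ⟨⟨hu, -⟩, hv⟩ := h.mem s hs
  rw [sqrtTOf]; linarith [mem_Ici.1 hv]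

theorem sqrtTOf_pos (h : IsPerturbedFLRWGeodesic U₀ U₁ v₀ ε L s₀ S u v pu pv A R N D)
    (hs : s ∈ Ico s₀ S) : 0 < sqrtTOf u v s := by
  linarith [h.half_le_sqrtTOf hs, h.v₀_add_U₀_pos]

theorem two_mul_ε_le_sqrtTOf (h : IsPerturbedFLRWGeodesic U₀ U₁ v₀ ε L s₀ S u v pu pv A R N D)
    (hs : s ∈ Ico s₀ S) : 2 * ε ≤ sqrtTOf u v s := by
  linarith [h.half_le_sqrtTOf hs, h.four_mul_ε_le]

theorem ε_le_sqrtTOf_sq (h : IsPerturbedFLRWGeodesic U₀ U₁ v₀ ε L s₀ S u v pu pv A R N D)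
    (hs : s ∈ Ico s₀ S) : ε ≤ sqrtTOf u v s ^ 2 := by
  have hm := h.half_le_sqrtTOf hs
  have : ((v₀ + U₀) / 2) ^ 2 ≤ sqrtTOf u v s ^ 2 :=
    pow_le_pow_left₀ (by linarith [h.v₀_add_U₀_pos]) hm 2
  linarith [h.four_mul_ε_le_sq]

theorem one_le_rOf (h : IsPerturbedFLRWGeodesic U₀ U₁ v₀ ε L s₀ S u v pu pv A R N D)
    (hs : s ∈ Ico s₀ S) : 1 ≤ rOf u v s := by
  obtain ⟨⟨-, hu⟩, hv⟩ := h.mem s hs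
  rw [rOf]; linarith [mem_Ici.1 hv, h.U₁_add_one_lt]

theorem sqrtTOf_le_mul_rOf (h : IsPerturbedFLRWGeodesic U₀ U₁ v₀ ε L s₀ S u v pu pv A R N D)
    (hs : s ∈ Ico s₀ S) : sqrtTOf u v s ≤ (U₁ + 1) * rOf u v s := by
  have hr := h.one_le_rOf hs
  obtain ⟨⟨-, hu⟩, -⟩ := h.mem s hs
  rw [rOf] at hr ⊢
  rw [sqrtTOf]
  nlinarith [h.U₁_pos]

theorem sqrtTOf_sq_le (h : IsPerturbedFLRWGeodesic U₀ U₁ v₀ ε L s₀ S u v pu pv A R N D)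
    (hs : s ∈ Ico s₀ S) : sqrtTOf u v s ^ 2 ≤ (U₁ + 1) ^ 2 * rOf u v s ^ 2 := by
  rw [← mul_pow]; exact pow_le_pow_left₀ (h.sqrtTOf_pos hs).le (h.sqrtTOf_le_mul_rOf hs) 2

theorem sqrt_tOf_eq (h : IsPerturbedFLRWGeodesic U₀ U₁ v₀ ε L s₀ S u v pu pv A R N D)
    (hs : s ∈ Ico s₀ S) : √(tOf u v s) = sqrtTOf u v s := by
  rw [← sqrtTOf_sq, sqrt_sq (h.sqrtTOf_pos hs).le]

theorem abs_R_sub_mul_le (h : IsPerturbedFLRWGeodesic U₀ U₁ v₀ ε L s₀ S u v pu pv A R N D)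
    (hs : s ∈ Ico s₀ S) : |R s - sqrtTOf u v s * rOf u v s| ≤ ε := by
  simpa only [h.sqrt_tOf_eq hs] using h.abs_R_sub_le s hs

theorem abs_sub_sq_mul_D_le (h : IsPerturbedFLRWGeodesic U₀ U₁ v₀ ε L s₀ S u v pu pv A R N D)
    (hs : s ∈ Ico s₀ S) : |sqrtTOf u v s - sqrtTOf u v s ^ 2 * D s| ≤ ε := by
  have hm := h.sqrtTOf_pos hs
  have hD := h.abs_D_sub_le s hs
  rw [h.sqrt_tOf_eq hs, ← sqrtTOf_sq] at hD
  calc |sqrtTOf u v s - sqrtTOf u v s ^ 2 * D s|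
      = sqrtTOf u v s ^ 2 * |D s - 1 / sqrtTOf u v s| := by
        rw [← abs_of_pos (pow_pos hm 2), ← abs_mul, abs_of_pos (pow_pos hm 2), ← abs_neg]
        congr 1; field_simp; ring
    _ ≤ sqrtTOf u v s ^ 2 * (ε / sqrtTOf u v s ^ 2) := by gcongr
    _ = ε := by field_simp

theorem three_mul_sq_le_A (h : IsPerturbedFLRWGeodesic U₀ U₁ v₀ ε L s₀ S u v pu pv A R N D)
    (hs : s ∈ Ico s₀ S) : 3 * sqrtTOf u v s ^ 2 ≤ A s := by
  have hA := (abs_le.1 (h.abs_A_sub_le s hs)).1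
  rw [← sqrtTOf_sq] at hA
  nlinarith [h.ε_le_one, sq_nonneg (sqrtTOf u v s)]

theorem A_le_five_mul_sq (h : IsPerturbedFLRWGeodesic U₀ U₁ v₀ ε L s₀ S u v pu pv A R N D)
    (hs : s ∈ Ico s₀ S) : A s ≤ 5 * sqrtTOf u v s ^ 2 := by
  have hA := (abs_le.1 (h.abs_A_sub_le s hs)).2
  rw [← sqrtTOf_sq] at hA
  nlinarith [h.ε_le_one, sq_nonneg (sqrtTOf u v s)]

theorem A_pos (h : IsPerturbedFLRWGeodesic U₀ U₁ v₀ ε L s₀ S u v pu pv A R N D)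
    (hs : s ∈ Ico s₀ S) : 0 < A s := by
  have := h.sqrtTOf_pos hs
  linarith [h.three_mul_sq_le_A hs, pow_pos this 2]

theorem two_mul_ε_le_mul_rOf (h : IsPerturbedFLRWGeodesic U₀ U₁ v₀ ε L s₀ S u v pu pv A R N D)
    (hs : s ∈ Ico s₀ S) : 2 * ε ≤ sqrtTOf u v s * rOf u v s := by
  have := h.sqrtTOf_pos hs
  nlinarith [h.two_mul_ε_le_sqrtTOf hs, h.one_le_rOf hs]

theorem mul_rOf_le_two_mul_R (h : IsPerturbedFLRWGeodesic U₀ U₁ v₀ ε L s₀ S u v pu pv A R N D)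
    (hs : s ∈ Ico s₀ S) : sqrtTOf u v s * rOf u v s ≤ 2 * R s := by
  linarith [(abs_le.1 (h.abs_R_sub_mul_le hs)).1, h.two_mul_ε_le_mul_rOf hs]

theorem two_mul_R_le (h : IsPerturbedFLRWGeodesic U₀ U₁ v₀ ε L s₀ S u v pu pv A R N D)
    (hs : s ∈ Ico s₀ S) : 2 * R s ≤ 3 * (sqrtTOf u v s * rOf u v s) := by
  linarith [(abs_le.1 (h.abs_R_sub_mul_le hs)).2, h.two_mul_ε_le_mul_rOf hs]

theorem R_pos (h : IsPerturbedFLRWGeodesic U₀ U₁ v₀ ε L s₀ S u v pu pv A R N D)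
    (hs : s ∈ Ico s₀ S) : 0 < R s := by
  have := h.sqrtTOf_pos hs
  nlinarith [h.mul_rOf_le_two_mul_R hs, h.one_le_rOf hs]

theorem hasDerivAt_tOf_mul_pv (h : IsPerturbedFLRWGeodesic U₀ U₁ v₀ ε L s₀ S u v pu pv A R N D)
    (hs : s ∈ Ico s₀ S) :
    HasDerivAt (fun x => tOf u v x * pv x) (tpvDeriv u v pu pv R N D s) s := by
  have ht : HasDerivAt (tOf u v) (2 * sqrtTOf u v s * ((pv s + pu s) / 2)) s := by
    have := ((h.hasDerivAt_u s hs).sqrtTOf (h.hasDerivAt_v s hs)).fun_pow 2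
    simp only [sqrtTOf_sq] at this
    simpa using this
  refine (ht.mul (h.hasDerivAt_pv s hs)).congr_deriv ?_
  have hA := (h.A_pos hs).ne'
  have hR := (h.R_pos hs).ne'
  rw [tpvDeriv, ← h.mass_shell s hs, ← sqrtTOf_sq]
  field_simp
  ring

theorem sub_div_R_nonneg (h : IsPerturbedFLRWGeodesic U₀ U₁ v₀ ε L s₀ S u v pu pv A R N D)
    (hs : s ∈ Ico s₀ S) : 0 ≤ sqrtTOf u v s - 2 * sqrtTOf u v s ^ 2 * N s / R s := by
  have hm := h.sqrtTOf_pos hs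
  have hε₁ := mul_le_mul_of_nonneg_left (h.two_mul_ε_le_sqrtTOf hs) (sq_nonneg (sqrtTOf u v s))
  have hε₂ := mul_nonneg hm.le (sub_nonneg.2 (h.ε_le_sqrtTOf_sq hs))
  have hr : rOf u v s = 2 * sqrtTOf u v s - 2 * u s := by rw [rOf, sqrtTOf]; ring
  rw [sub_nonneg, div_le_iff₀ (h.R_pos hs)]
  calc 2 * sqrtTOf u v s ^ 2 * N s ≤ 2 * sqrtTOf u v s ^ 2 * (-u s + ε) := by
        gcongr; linarith [(abs_le.1 (h.abs_N_add_le s hs)).2]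
    _ ≤ sqrtTOf u v s * (sqrtTOf u v s * rOf u v s - ε) := by rw [hr]; linarith
    _ ≤ sqrtTOf u v s * R s := by
        gcongr; linarith [(abs_le.1 (h.abs_R_sub_mul_le hs)).1]

theorem sub_div_R_le (h : IsPerturbedFLRWGeodesic U₀ U₁ v₀ ε L s₀ S u v pu pv A R N D)
    (hs : s ∈ Ico s₀ S) :
    sqrtTOf u v s - 2 * sqrtTOf u v s ^ 2 * N s / R s ≤ 5 * (U₁ + 1) * sqrtTOf u v s := by
  have hm := h.sqrtTOf_pos hs
  have hR := h.R_pos hs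
  have hU := h.U₁_pos
  have key : 2 * sqrtTOf u v s ^ 2 * -N s ≤ 4 * (U₁ + 1) * sqrtTOf u v s * R s :=
    calc 2 * sqrtTOf u v s ^ 2 * -N s ≤ 2 * sqrtTOf u v s ^ 2 * (U₁ + 1) := by
          gcongr
          linarith [(abs_le.1 (h.abs_N_add_le s hs)).1, (h.mem s hs).1.2, h.ε_le_one]
      _ ≤ 2 * (U₁ + 1) * sqrtTOf u v s * (sqrtTOf u v s * rOf u v s) := by
          nlinarith [mul_le_mul_of_nonneg_left (h.one_le_rOf hs)
            (mul_nonneg (by linarith : (0:ℝ) ≤ 2 * (U₁ + 1)) (sq_nonneg (sqrtTOf u v s)))]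
      _ ≤ 2 * (U₁ + 1) * sqrtTOf u v s * (2 * R s) := by
          gcongr _ * ?_; exact h.mul_rOf_le_two_mul_R hs
      _ = 4 * (U₁ + 1) * sqrtTOf u v s * R s := by ring
  rw [sub_le_iff_le_add, ← sub_le_iff_le_add', le_div_iff₀ hR]
  nlinarith [mul_pos hU (mul_pos hm hR)]

theorem pu_mul_pv_le (h : IsPerturbedFLRWGeodesic U₀ U₁ v₀ ε L s₀ S u v pu pv A R N D)
    (hs : s ∈ Ico s₀ S) : 3 * sqrtTOf u v s ^ 4 * rOf u v s ^ 2 * (pu s * pv s) ≤ 4 * L ^ 2 := by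
  have hm := h.sqrtTOf_pos hs
  have hr := h.one_le_rOf hs
  have hR : (sqrtTOf u v s * rOf u v s) ^ 2 ≤ 4 * R s ^ 2 := by
    nlinarith [h.mul_rOf_le_two_mul_R hs, mul_pos hm (by linarith : (0:ℝ) < rOf u v s)]
  have hAR : 3 * sqrtTOf u v s ^ 2 * (sqrtTOf u v s * rOf u v s) ^ 2 ≤ 4 * (A s * R s ^ 2) := by
    nlinarith [mul_le_mul (h.three_mul_sq_le_A hs) hR (sq_nonneg _) (h.A_pos hs).le]
  have hPQ := mul_nonneg (h.pu_nonneg s hs) (h.pv_nonneg s hs)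
  have := mul_le_mul_of_nonneg_right hAR hPQ
  rw [← h.mass_shell s hs]
  linarith

theorem neg_mul_sq_le_tpvDeriv
    (h : IsPerturbedFLRWGeodesic U₀ U₁ v₀ ε L s₀ S u v pu pv A R N D) (hs : s ∈ Ico s₀ S) :
    -(ε * pv s ^ 2) ≤ tpvDeriv u v pu pv R N D s := by
  rw [tpvDeriv]
  have h₁ := mul_nonneg (h.sub_div_R_nonneg hs) (mul_nonneg (h.pu_nonneg s hs) (h.pv_nonneg s hs))
  have h₂ := mul_le_mul_of_nonneg_right (abs_le.1 (h.abs_sub_sq_mul_D_le hs)).1 (sq_nonneg (pv s))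
  linarith

theorem tpvDeriv_le (h : IsPerturbedFLRWGeodesic U₀ U₁ v₀ ε L s₀ S u v pu pv A R N D)
    (hs : s ∈ Ico s₀ S) :
    tpvDeriv u v pu pv R N D s
      ≤ 20 * (U₁ + 1) / 3 * L ^ 2 / (sqrtTOf u v s ^ 3 * rOf u v s ^ 2) + ε * pv s ^ 2 := by
  have hm := h.sqrtTOf_pos hs
  have hr : 0 < rOf u v s := by linarith [h.one_le_rOf hs]
  have hPQ := mul_nonneg (h.pu_nonneg s hs) (h.pv_nonneg s hs)
  have h₁ : 5 * (U₁ + 1) * sqrtTOf u v s * (pu s * pv s)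
      ≤ 20 * (U₁ + 1) / 3 * L ^ 2 / (sqrtTOf u v s ^ 3 * rOf u v s ^ 2) := by
    rw [le_div_iff₀ (by positivity)]
    have := mul_le_mul_of_nonneg_left (h.pu_mul_pv_le hs)
      (by linarith [h.U₁_pos] : (0:ℝ) ≤ 5 * (U₁ + 1) / 3)
    nlinarith
  have h₂ := mul_le_mul_of_nonneg_right (h.sub_div_R_le hs) hPQ
  rw [tpvDeriv]
  have h₃ := mul_le_mul_of_nonneg_right (abs_le.1 (h.abs_sub_sq_mul_D_le hs)).2 (sq_nonneg (pv s))
  linarith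

theorem hasDerivAt_sqrtTOf (h : IsPerturbedFLRWGeodesic U₀ U₁ v₀ ε L s₀ S u v pu pv A R N D)
    (hs : s ∈ Ico s₀ S) : HasDerivAt (sqrtTOf u v) ((pv s + pu s) / 2) s :=
  (h.hasDerivAt_u s hs).sqrtTOf (h.hasDerivAt_v s hs)

theorem mul_pv_sq_le (h : IsPerturbedFLRWGeodesic U₀ U₁ v₀ ε L s₀ S u v pu pv A R N D)
    (hs : s ∈ Ico s₀ S) :
    ε * pv s ^ 2 ≤ 2 * ε * ((pv s + pu s) / 2) / sqrtTOf u v s ^ 2 * (tOf u v s * pv s) := by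
  have hm := h.sqrtTOf_pos hs
  rw [← sqrtTOf_sq]
  field_simp
  nlinarith [mul_nonneg (mul_nonneg h.ε_nonneg (h.pu_nonneg s hs)) (h.pv_nonneg s hs)]

theorem exp_neg_one_mul_le (h : IsPerturbedFLRWGeodesic U₀ U₁ v₀ ε L s₀ S u v pu pv A R N D)
    (hs : s ∈ Ico s₀ S) : exp (-1) * (tOf u v s₀ * pv s₀) ≤ tOf u v s * pv s := by
  have hs₀ : s₀ ∈ Ico s₀ S := ⟨le_rfl, hs.1.trans_lt hs.2⟩
  refine exp_neg_one_mul_le_of_hasDerivAt (fun x hx => h.hasDerivAt_sqrtTOf hx)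
    (fun x hx => h.sqrtTOf_pos hx) (fun x hx => h.hasDerivAt_tOf_mul_pv hx)
    (fun x hx => (neg_le_neg (h.mul_pv_sq_le hx)).trans (h.neg_mul_sq_le_tpvDeriv hx))
    (by linarith [h.ε_nonneg]) (h.two_mul_ε_le_sqrtTOf hs₀) ?_ hs
  rw [← sqrtTOf_sq]
  exact mul_nonneg (sq_nonneg _) (h.pv_nonneg s₀ hs₀)

theorem tOf_mul_pv_pos (h : IsPerturbedFLRWGeodesic U₀ U₁ v₀ ε L s₀ S u v pu pv A R N D)
    (hs : s ∈ Ico s₀ S) (hpv : 0 < pv s) : 0 < tOf u v s * pv s := by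
  rw [← sqrtTOf_sq]; exact mul_pos (pow_pos (h.sqrtTOf_pos hs) 2) hpv

theorem le_exp_one_mul_sq_mul_pv
    (h : IsPerturbedFLRWGeodesic U₀ U₁ v₀ ε L s₀ S u v pu pv A R N D) (hs : s ∈ Ico s₀ S) :
    tOf u v s₀ * pv s₀ ≤ exp 1 * (sqrtTOf u v s ^ 2 * pv s) := by
  have := h.exp_neg_one_mul_le hs
  rwa [← sqrtTOf_sq u v s, exp_neg, inv_mul_le_iff₀ (exp_pos 1)] at this

theorem div_pow_add_two_le (h : IsPerturbedFLRWGeodesic U₀ U₁ v₀ ε L s₀ S u v pu pv A R N D)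
    (hpv₀ : 0 < pv s₀) (hs : s ∈ Ico s₀ S) {Y : ℝ} (hY : 0 ≤ Y) (j : ℕ) :
    Y / sqrtTOf u v s ^ (j + 2)
      ≤ 2 * exp 1 * Y / (tOf u v s₀ * pv s₀) * ((pv s + pu s) / 2) / sqrtTOf u v s ^ j := by
  have hm := h.sqrtTOf_pos hs
  have hq₀ := h.tOf_mul_pv_pos ⟨le_rfl, hs.1.trans_lt hs.2⟩ hpv₀
  calc Y / sqrtTOf u v s ^ (j + 2)
      = Y / (tOf u v s₀ * pv s₀) * (tOf u v s₀ * pv s₀) / sqrtTOf u v s ^ 2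
          / sqrtTOf u v s ^ j := by
        rw [div_mul_cancel₀ Y hq₀.ne', div_div, ← pow_add, add_comm 2 j]
    _ ≤ Y / (tOf u v s₀ * pv s₀) * (exp 1 * (sqrtTOf u v s ^ 2 * pv s)) / sqrtTOf u v s ^ 2
          / sqrtTOf u v s ^ j := by
        gcongr Y / _ * ?_ / _ / _; exact h.le_exp_one_mul_sq_mul_pv hs
    _ = 2 * exp 1 * Y / (tOf u v s₀ * pv s₀) * (pv s / 2) / sqrtTOf u v s ^ j := by
        field_simp
    _ ≤ _ := by gcongr; linarith [h.pu_nonneg s hs]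

theorem pu_le (h : IsPerturbedFLRWGeodesic U₀ U₁ v₀ ε L s₀ S u v pu pv A R N D)
    (hpv₀ : 0 < pv s₀) (hs : s ∈ Ico s₀ S) :
    pu s ≤ 4 * exp 1 / 3 * L ^ 2 / (tOf u v s * rOf u v s ^ 2 * (tOf u v s₀ * pv s₀)) := by
  have hm := h.sqrtTOf_pos hs
  have hr : 0 < rOf u v s := by linarith [h.one_le_rOf hs]
  have hq₀ := h.tOf_mul_pv_pos ⟨le_rfl, hs.1.trans_lt hs.2⟩ hpv₀
  rw [le_div_iff₀ (by rw [← sqrtTOf_sq]; positivity), ← sqrtTOf_sq]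
  calc pu s * (sqrtTOf u v s ^ 2 * rOf u v s ^ 2 * (tOf u v s₀ * pv s₀))
      ≤ pu s * (sqrtTOf u v s ^ 2 * rOf u v s ^ 2 * (exp 1 * (sqrtTOf u v s ^ 2 * pv s))) := by
        gcongr pu s * (_ * ?_)
        · exact h.pu_nonneg s hs
        · exact h.le_exp_one_mul_sq_mul_pv hs
    _ = exp 1 / 3 * (3 * sqrtTOf u v s ^ 4 * rOf u v s ^ 2 * (pu s * pv s)) := by ring
    _ ≤ exp 1 / 3 * (4 * L ^ 2) := mul_le_mul_of_nonneg_left (h.pu_mul_pv_le hs) (by positivity)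
    _ = 4 * exp 1 / 3 * L ^ 2 := by ring

theorem L_sq_le (h : IsPerturbedFLRWGeodesic U₀ U₁ v₀ ε L s₀ S u v pu pv A R N D)
    (hS : s₀ < S) (hv : v s₀ = v₀) (hpu : pu s₀ ≤ pv s₀ / 2) :
    L ^ 2 ≤ 6 * (v₀ - U₀) ^ 2 * (tOf u v s₀ * pv s₀) ^ 2 := by
  have hs₀ : s₀ ∈ Ico s₀ S := ⟨le_rfl, hS⟩
  have hm := h.sqrtTOf_pos hs₀
  have hr₁ := h.one_le_rOf hs₀
  have hr : rOf u v s₀ ≤ v₀ - U₀ := by rw [rOf, hv]; linarith [(h.mem s₀ hs₀).1.1]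
  have hpv := h.pv_nonneg s₀ hs₀
  have hR : R s₀ ^ 2 ≤ 9 / 4 * (sqrtTOf u v s₀ * rOf u v s₀) ^ 2 := by
    nlinarith [h.two_mul_R_le hs₀, h.R_pos hs₀]
  have hAR : A s₀ * R s₀ ^ 2
      ≤ 5 * sqrtTOf u v s₀ ^ 2 * (9 / 4 * (sqrtTOf u v s₀ * rOf u v s₀) ^ 2) :=
    mul_le_mul (h.A_le_five_mul_sq hs₀) hR (sq_nonneg _) (by positivity)
  have hPQ : pu s₀ * pv s₀ ≤ pv s₀ ^ 2 / 2 := by nlinarith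
  have hL : L ^ 2 ≤ 45 / 8 * rOf u v s₀ ^ 2 * (sqrtTOf u v s₀ ^ 2 * pv s₀) ^ 2 := by
    rw [← h.mass_shell s₀ hs₀, mul_assoc]
    nlinarith [mul_le_mul hAR hPQ (mul_nonneg (h.pu_nonneg s₀ hs₀) hpv) (by positivity)]
  rw [← sqrtTOf_sq]
  nlinarith [pow_le_pow_left₀ (by linarith) hr 2, sq_nonneg (sqrtTOf u v s₀ ^ 2 * pv s₀)]

theorem tpvDeriv_le_of_pv_pos
    (h : IsPerturbedFLRWGeodesic U₀ U₁ v₀ ε L s₀ S u v pu pv A R N D)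
    (hpv₀ : 0 < pv s₀) (hs : s ∈ Ico s₀ S) :
    tpvDeriv u v pu pv R N D s
      ≤ 2 * ε * ((pv s + pu s) / 2) / sqrtTOf u v s ^ 2 * (tOf u v s * pv s)
        + 2 * exp 1 * (20 * (U₁ + 1) ^ 3 / 3 * L ^ 2) / (tOf u v s₀ * pv s₀)
          * ((pv s + pu s) / 2) / sqrtTOf u v s ^ 3 := by
  have hm := h.sqrtTOf_pos hs
  have hU := h.U₁_pos
  have hr : 0 < rOf u v s := by linarith [h.one_le_rOf hs]
  have hL : 20 * (U₁ + 1) / 3 * L ^ 2 / (sqrtTOf u v s ^ 3 * rOf u v s ^ 2)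
      ≤ 20 * (U₁ + 1) ^ 3 / 3 * L ^ 2 / sqrtTOf u v s ^ (3 + 2) := by
    rw [div_le_div_iff₀ (by positivity) (by positivity)]
    have := mul_le_mul_of_nonneg_left (h.sqrtTOf_sq_le hs)
      (by positivity : (0:ℝ) ≤ 20 * (U₁ + 1) / 3 * L ^ 2 * sqrtTOf u v s ^ 3)
    nlinarith
  linarith [h.tpvDeriv_le hs, h.mul_pv_sq_le hs,
    h.div_pow_add_two_le hpv₀ hs (by positivity : (0:ℝ) ≤ 20 * (U₁ + 1) ^ 3 / 3 * L ^ 2) 3]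

theorem tOf_mul_pv_le (h : IsPerturbedFLRWGeodesic U₀ U₁ v₀ ε L s₀ S u v pu pv A R N D)
    (hv : v s₀ = v₀) (hpu : pu s₀ ≤ pv s₀ / 2) (hpv₀ : 0 < pv s₀) (hs : s ∈ Ico s₀ S) :
    tOf u v s * pv s ≤ exp 1 * (1 + 160 * exp 1 * (U₁ + 1) ^ 3 * (v₀ - U₀) ^ 2 / (v₀ + U₀) ^ 2)
      * (tOf u v s₀ * pv s₀) := by
  have hs₀ : s₀ ∈ Ico s₀ S := ⟨le_rfl, hs.1.trans_lt hs.2⟩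
  have hq₀ := h.tOf_mul_pv_pos hs₀ hpv₀
  have hm₀ := h.sqrtTOf_pos hs₀
  have hU := h.U₁_pos
  have hκ := h.v₀_add_U₀_pos
  have hgrowth := le_exp_one_mul_of_hasDerivAt (m := sqrtTOf u v) (q := fun x => tOf u v x * pv x)
    (fun x hx => h.hasDerivAt_sqrtTOf hx) (fun x hx => h.sqrtTOf_pos hx)
    (fun x hx => by have := h.pu_nonneg x hx; have := h.pv_nonneg x hx; positivity)
    (fun x hx => h.hasDerivAt_tOf_mul_pv hx) (fun x hx => h.tpvDeriv_le_of_pv_pos hpv₀ hx)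
    (by linarith [h.ε_nonneg]) (h.two_mul_ε_le_sqrtTOf hs₀) (by positivity) hq₀.le hs
  have hκm : (v₀ + U₀) ^ 2 / 4 ≤ sqrtTOf u v s₀ ^ 2 := by
    nlinarith [h.half_le_sqrtTOf hs₀]
  have hinitial : 2 * exp 1 * (20 * (U₁ + 1) ^ 3 / 3 * L ^ 2) / (tOf u v s₀ * pv s₀)
      / (2 * sqrtTOf u v s₀ ^ 2)
      ≤ 160 * exp 1 * (U₁ + 1) ^ 3 * (v₀ - U₀) ^ 2 / (v₀ + U₀) ^ 2 * (tOf u v s₀ * pv s₀) := by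
    rw [div_div, div_le_iff₀ (by positivity)]
    calc 2 * exp 1 * (20 * (U₁ + 1) ^ 3 / 3 * L ^ 2)
        ≤ 2 * exp 1 * (20 * (U₁ + 1) ^ 3 / 3 * (6 * (v₀ - U₀) ^ 2 * (tOf u v s₀ * pv s₀) ^ 2)) := by
          gcongr; exact h.L_sq_le hs₀.2 hv hpu
      _ = 160 * exp 1 * (U₁ + 1) ^ 3 * (v₀ - U₀) ^ 2 / (v₀ + U₀) ^ 2 * (tOf u v s₀ * pv s₀)
            * (tOf u v s₀ * pv s₀ * (2 * ((v₀ + U₀) ^ 2 / 4))) := by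
          field_simp; ring
      _ ≤ _ := by gcongr
  calc tOf u v s * pv s ≤ _ := hgrowth
    _ ≤ exp 1 * (tOf u v s₀ * pv s₀
          + 160 * exp 1 * (U₁ + 1) ^ 3 * (v₀ - U₀) ^ 2 / (v₀ + U₀) ^ 2 * (tOf u v s₀ * pv s₀)) := by
        gcongr
    _ = _ := by ring

theorem u_le (h : IsPerturbedFLRWGeodesic U₀ U₁ v₀ ε L s₀ S u v pu pv A R N D)
    (hpv₀ : 0 < pv s₀) (hs : s ∈ Ico s₀ S) :
    u s ≤ u s₀ + 16 * exp 1 ^ 2 * (U₁ + 1) ^ 2 / (3 * (v₀ + U₀))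
      * (L / (tOf u v s₀ * pv s₀)) ^ 2 := by
  have hs₀ : s₀ ∈ Ico s₀ S := ⟨le_rfl, hs.1.trans_lt hs.2⟩
  have hq₀ := h.tOf_mul_pv_pos hs₀ hpv₀
  have hU := h.U₁_pos
  have hκ := h.v₀_add_U₀_pos
  have hpu : ∀ x ∈ Ico s₀ S, pu x ≤ 4 * exp 1 * (U₁ + 1) ^ 2 / 3 * L ^ 2 / (tOf u v s₀ * pv s₀)
      / sqrtTOf u v x ^ (2 + 2) := by
    intro x hx
    have hm := h.sqrtTOf_pos hx
    have hr : 0 < rOf u v x := by linarith [h.one_le_rOf hx]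
    refine (h.pu_le hpv₀ hx).trans ?_
    rw [← sqrtTOf_sq, div_div, div_le_div_iff₀ (by positivity) (by positivity)]
    have := mul_le_mul_of_nonneg_left (h.sqrtTOf_sq_le hx)
      (by positivity : (0:ℝ) ≤ 4 * exp 1 / 3 * L ^ 2 * sqrtTOf u v x ^ 2 * (tOf u v s₀ * pv s₀))
    nlinarith
  have hdrift := le_add_div_of_hasDerivAt (fun x hx => h.hasDerivAt_sqrtTOf hx)
    (fun x hx => h.sqrtTOf_pos hx) h.hasDerivAt_u
    (fun x hx => (hpu x hx).trans (h.div_pow_add_two_le hpv₀ hx (by positivity) 2))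
    (by positivity) hs
  refine hdrift.trans (add_le_add le_rfl ?_)
  rw [div_le_iff₀ (h.sqrtTOf_pos hs₀)]
  calc 2 * exp 1 * (4 * exp 1 * (U₁ + 1) ^ 2 / 3 * L ^ 2 / (tOf u v s₀ * pv s₀))
        / (tOf u v s₀ * pv s₀)
      = 16 * exp 1 ^ 2 * (U₁ + 1) ^ 2 / (3 * (v₀ + U₀)) * (L / (tOf u v s₀ * pv s₀)) ^ 2
          * ((v₀ + U₀) / 2) := by
        field_simp; ring
    _ ≤ _ := by gcongr; exact h.half_le_sqrtTOf hs₀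

theorem estimates (h : IsPerturbedFLRWGeodesic U₀ U₁ v₀ ε L s₀ S u v pu pv A R N D)
    (hv : v s₀ = v₀) (hpu : pu s₀ ≤ pv s₀ / 2) (hpv₀ : 0 < pv s₀) (hs : s ∈ Ico s₀ S) :
    (geodesicConstant U₀ U₁ v₀)⁻¹ * (tOf u v s₀ * pv s₀) ≤ tOf u v s * pv s ∧
      tOf u v s * pv s ≤ geodesicConstant U₀ U₁ v₀ * (tOf u v s₀ * pv s₀) ∧
      pu s ≤ geodesicConstant U₀ U₁ v₀ * L ^ 2
        / (tOf u v s * rOf u v s ^ 2 * (tOf u v s₀ * pv s₀)) ∧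
      u s ≤ u s₀ + geodesicConstant U₀ U₁ v₀ * (L / (tOf u v s₀ * pv s₀)) ^ 2 := by
  have hq₀ := h.tOf_mul_pv_pos ⟨le_rfl, hs.1.trans_lt hs.2⟩ hpv₀
  refine ⟨?_, ?_, ?_, ?_⟩
  · refine le_trans (mul_le_mul_of_nonneg_right ?_ hq₀.le) (h.exp_neg_one_mul_le hs)
    rw [exp_neg]
    exact inv_anti₀ (exp_pos 1) (exp_one_le_geodesicConstant U₀ U₁ v₀)
  · refine (h.tOf_mul_pv_le hv hpu hpv₀ hs).trans (mul_le_mul_of_nonneg_right ?_ hq₀.le)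
    exact (le_max_left _ _).trans (le_max_right _ _)
  · refine (h.pu_le hpv₀ hs).trans (div_le_div_of_nonneg_right ?_ ?_)
    · exact mul_le_mul_of_nonneg_right (le_max_left _ _) (sq_nonneg L)
    · exact mul_nonneg (mul_nonneg (by unfold tOf; positivity) (sq_nonneg _)) hq₀.le
  · refine (h.u_le hpv₀ hs).trans (add_le_add le_rfl ?_)
    exact mul_le_mul_of_nonneg_right ((le_max_right _ _).trans (le_max_right _ _)) (sq_nonneg _)

end IsPerturbedFLRWGeodesic

theorem perturbed_flrw_geodesic_estimates_general (U₀ U₁ v₀ L₀ : ℝ)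
    (hU₁ : 0 < U₁) (hv₀ : U₁ + 1 < v₀) :
    ∃ εbar : ℝ, 0 < εbar ∧ ∃ C : ℝ, 1 ≤ C ∧
      ∀ (Om2 R lam nu duLogOm2 dvLogOm2 : ℝ → ℝ → ℝ) (ε : ℝ),
        0 ≤ ε → ε ≤ εbar →
        (∀ a ∈ Icc U₀ U₁, ∀ b ∈ Ici v₀,
          0 < Om2 a b ∧ 0 < R a b ∧
          HasDerivAt (fun b' => R a b') (lam a b) b ∧
          HasDerivAt (fun a' => R a' b) (nu a b) a ∧
          HasDerivAt (fun b' => Real.log (Om2 a b')) (dvLogOm2 a b) b ∧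
          HasDerivAt (fun a' => Real.log (Om2 a' b)) (duLogOm2 a b) a ∧
          |Om2 a b - 4 * ((b + a) ^ 2 / 4)| ≤ ε * ((b + a) ^ 2 / 4) ∧
          |dvLogOm2 a b - 1 / Real.sqrt ((b + a) ^ 2 / 4)| ≤ ε / ((b + a) ^ 2 / 4) ∧
          |duLogOm2 a b - 1 / Real.sqrt ((b + a) ^ 2 / 4)| ≤ ε ∧
          |R a b - Real.sqrt ((b + a) ^ 2 / 4) * (b - a)| ≤ ε ∧
          |lam a b - b| ≤ ε ∧
          |nu a b + a| ≤ ε) →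
        ∀ (L : ℝ), 0 ≤ L → L ≤ L₀ →
        ∀ (s₀ S : ℝ) (u v pu pv : ℝ → ℝ),
          (∀ s ∈ Ico s₀ S, u s ∈ Icc U₀ U₁ ∧ v s ∈ Ici v₀) →
          (∀ s ∈ Ico s₀ S, HasDerivAt u (pu s) s) →
          (∀ s ∈ Ico s₀ S, HasDerivAt v (pv s) s) →
          (∀ s ∈ Ico s₀ S, HasDerivAt pu
            (-(duLogOm2 (u s) (v s)) * (pu s) ^ 2
              - 2 * lam (u s) (v s) * L ^ 2
                  / (Om2 (u s) (v s) * (R (u s) (v s)) ^ 3)) s) →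
          (∀ s ∈ Ico s₀ S, HasDerivAt pv
            (-(dvLogOm2 (u s) (v s)) * (pv s) ^ 2
              - 2 * nu (u s) (v s) * L ^ 2
                  / (Om2 (u s) (v s) * (R (u s) (v s)) ^ 3)) s) →
          (∀ s ∈ Ico s₀ S,
            Om2 (u s) (v s) * (R (u s) (v s)) ^ 2 * pu s * pv s = L ^ 2) →
          (∀ s ∈ Ico s₀ S, 0 ≤ pu s) →
          (∀ s ∈ Ico s₀ S, 0 ≤ pv s) →
          s₀ < S → v s₀ = v₀ → 0 < pv s₀ → pu s₀ ≤ pv s₀ / 2 →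
          (∀ s ∈ Ico s₀ S,
            C⁻¹ * (tOf u v s₀ * pv s₀) ≤ tOf u v s * pv s ∧
            tOf u v s * pv s ≤ C * (tOf u v s₀ * pv s₀) ∧
            0 ≤ pu s ∧
            pu s ≤ C * L ^ 2 / (tOf u v s * (rOf u v s) ^ 2 * (tOf u v s₀ * pv s₀)) ∧
            u s ≤ u s₀ + C * (L / (tOf u v s₀ * pv s₀)) ^ 2) ∧
          MonotoneOn u (Ico s₀ S) := by
  rcases le_or_gt (v₀ + U₀) 0 with hκ | hκ
  · -- then `(-v₀, v₀) ∈ D` has `t = 0`, so the hypotheses force `Ω² = 0` there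
    refine ⟨1, one_pos, 1, le_rfl, fun Om2 _ _ _ _ _ ε _ _ hdata => ?_⟩
    obtain ⟨hΩ, -, -, -, -, -, hclose, -⟩ :=
      hdata (-v₀) ⟨by linarith, by linarith⟩ v₀ self_mem_Ici
    norm_num at hclose
    linarith
  refine ⟨perturbationThreshold U₀ v₀, perturbationThreshold_pos hκ, geodesicConstant U₀ U₁ v₀,
    one_le_exp zero_le_one |>.trans (exp_one_le_geodesicConstant U₀ U₁ v₀), ?_⟩
  intro Om2 R lam nu duLogOm2 dvLogOm2 ε hε hεbar hdata L _ _ s₀ S u v pu pv hmem hu hv _ hpv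
    hshell hpu hpv0 _ hvs₀ hpv₀ hpu₀
  have h : IsPerturbedFLRWGeodesic U₀ U₁ v₀ ε L s₀ S u v pu pv (fun s => Om2 (u s) (v s))
      (fun s => R (u s) (v s)) (fun s => nu (u s) (v s)) (fun s => dvLogOm2 (u s) (v s)) := by
    refine ⟨hU₁, hv₀, hκ, hε, hεbar, hmem, hu, hv, hpv, hshell, hpu, hpv0, ?_, ?_, ?_, ?_⟩ <;>
    · intro s hs
      obtain ⟨-, -, -, -, -, -, hA, hD, -, hR, -, hN⟩ :=
        hdata (u s) (hmem s hs).1 (v s) (hmem s hs).2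
      assumption
  refine ⟨fun s hs => ?_, monotoneOn_Ico_of_hasDerivAt_nonneg hu hpu⟩
  obtain ⟨hlow, hup, hpu_le, hu_le⟩ := h.estimates hvs₀ hpu₀ hpv₀ hs
  exact ⟨hlow, hup, hpu s hs, hpu_le, hu_le⟩

/-- **Null geodesic estimates on perturbed FLRW backgrounds.**
Let `U₀ < 0 < U₁`, `v₀ > U₁ + 1`, `L₀ ≥ 0` and `D = [U₀,U₁] × [v₀,∞)`, with
`t = (v+u)²/4`, `r = v−u`.  There exist `ε̄ > 0` and `C ≥ 1`, depending only on
`U₀, U₁, v₀, L₀`, such that: for any positive `C¹` double null data `(Ω², R)` on `D`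
with `λ = ∂_vR`, `ν = ∂_uR` which is `ε`-close to FLRW in the sense
`|Ω² − 4t| ≤ εt`, `|∂_v log Ω² − t^{−1/2}| ≤ ε/t`, `|∂_u log Ω² − t^{−1/2}| ≤ ε`,
`|R − t^{1/2}r| ≤ ε`, `|λ − v| ≤ ε`, `|ν + u| ≤ ε` for some `0 ≤ ε ≤ ε̄`, and any
null geodesic `(u,v,pu,pv)` in `D` with angular momentum `L ∈ [0,L₀]`, satisfying
the mass shell relation `Ω²R²·pu·pv = L²`, `pu, pv ≥ 0`, `v(s₀) = v₀`, `pv(s₀) > 0`,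
`pu(s₀) ≤ pv(s₀)/2`, one has: `C^{−1}t(s₀)pv(s₀) ≤ t(s)pv(s) ≤ Ct(s₀)pv(s₀)`,
`0 ≤ pu(s) ≤ CL²/(t(s)r(s)²t(s₀)pv(s₀))`, `u` is nondecreasing and
`u(s) ≤ u(s₀) + C(L/(t(s₀)pv(s₀)))²`. -/
theorem perturbed_flrw_geodesic_estimates (U₀ U₁ v₀ L₀ : ℝ)
    (hU₀ : U₀ < 0) (hU₁ : 0 < U₁) (hv₀ : U₁ + 1 < v₀) (hL₀ : 0 ≤ L₀) :
    ∃ εbar : ℝ, 0 < εbar ∧ ∃ C : ℝ, 1 ≤ C ∧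
      ∀ (Om2 R lam nu duLogOm2 dvLogOm2 : ℝ → ℝ → ℝ) (ε : ℝ),
        0 ≤ ε → ε ≤ εbar →
        (∀ a ∈ Icc U₀ U₁, ∀ b ∈ Ici v₀,
          0 < Om2 a b ∧ 0 < R a b ∧
          HasDerivAt (fun b' => R a b') (lam a b) b ∧
          HasDerivAt (fun a' => R a' b) (nu a b) a ∧
          HasDerivAt (fun b' => Real.log (Om2 a b')) (dvLogOm2 a b) b ∧
          HasDerivAt (fun a' => Real.log (Om2 a' b)) (duLogOm2 a b) a ∧
          |Om2 a b - 4 * ((b + a) ^ 2 / 4)| ≤ ε * ((b + a) ^ 2 / 4) ∧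
          |dvLogOm2 a b - 1 / Real.sqrt ((b + a) ^ 2 / 4)| ≤ ε / ((b + a) ^ 2 / 4) ∧
          |duLogOm2 a b - 1 / Real.sqrt ((b + a) ^ 2 / 4)| ≤ ε ∧
          |R a b - Real.sqrt ((b + a) ^ 2 / 4) * (b - a)| ≤ ε ∧
          |lam a b - b| ≤ ε ∧
          |nu a b + a| ≤ ε) →
        ∀ (L : ℝ), 0 ≤ L → L ≤ L₀ →
        ∀ (s₀ S : ℝ) (u v pu pv : ℝ → ℝ),
          (∀ s ∈ Ico s₀ S, u s ∈ Icc U₀ U₁ ∧ v s ∈ Ici v₀) →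
          (∀ s ∈ Ico s₀ S, HasDerivAt u (pu s) s) →
          (∀ s ∈ Ico s₀ S, HasDerivAt v (pv s) s) →
          (∀ s ∈ Ico s₀ S, HasDerivAt pu
            (-(duLogOm2 (u s) (v s)) * (pu s) ^ 2
              - 2 * lam (u s) (v s) * L ^ 2
                  / (Om2 (u s) (v s) * (R (u s) (v s)) ^ 3)) s) →
          (∀ s ∈ Ico s₀ S, HasDerivAt pv
            (-(dvLogOm2 (u s) (v s)) * (pv s) ^ 2
              - 2 * nu (u s) (v s) * L ^ 2
                  / (Om2 (u s) (v s) * (R (u s) (v s)) ^ 3)) s) →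
          (∀ s ∈ Ico s₀ S,
            Om2 (u s) (v s) * (R (u s) (v s)) ^ 2 * pu s * pv s = L ^ 2) →
          (∀ s ∈ Ico s₀ S, 0 ≤ pu s) →
          (∀ s ∈ Ico s₀ S, 0 ≤ pv s) →
          s₀ < S → v s₀ = v₀ → 0 < pv s₀ → pu s₀ ≤ pv s₀ / 2 →
          (∀ s ∈ Ico s₀ S,
            C⁻¹ * (tOf u v s₀ * pv s₀) ≤ tOf u v s * pv s ∧
            tOf u v s * pv s ≤ C * (tOf u v s₀ * pv s₀) ∧
            0 ≤ pu s ∧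
            pu s ≤ C * L ^ 2 / (tOf u v s * (rOf u v s) ^ 2 * (tOf u v s₀ * pv s₀)) ∧
            u s ≤ u s₀ + C * (L / (tOf u v s₀ * pv s₀)) ^ 2) ∧
          MonotoneOn u (Ico s₀ S) :=
  perturbed_flrw_geodesic_estimates_general U₀ U₁ v₀ L₀ hU₁ hv₀
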